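/- arXiv:1110.5150 — 4 statements merged into one kernel-verified Lean document; each statement's English description precedes it below -/
import Mathlib

section
/- Let (T(t))_{t≥0} be a contraction C₀-semigroup on H, let σ : H → H be a bounded linear bijection with bounded inverse σ⁻¹, let F : 𝒞 → H be Fréchet differentiable with derivative DF, let x : [−τ,∞) → H be continuous, let η ∈ 𝒞, and let u : [0,∞) → ℝ be continuously differentiable with u(0) = 1. Define Υ : [−τ,∞) → H by Υ(t) = u(t)·T(t)η(0) for t ≥ 0 and Υ(t) = η(t) for t ∈ [−τ,0], and define ḣ(s) := σ⁻¹( DF(x_s)[Υ_s] − u'(s)·T(s)η(0) ) for s ≥ 0. Then Υ is a mild solution of the delay equation dΥ(t) = {AΥ(t) + DF(x_t)[Υ_t] − σ ḣ(t)} dt with Υ_0 = η; that is, for every t ≥ 0, Υ(t) = T(t)η(0) + ∫₀ᵗ T(t−s)( DF(x_s)[Υ_s] − σ(ḣ(s)) ) ds. -/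
open MeasureTheory

noncomputable section

/-- A contraction `C₀`-semigroup on a real normed space `H`: a family `(T t)_{t ≥ 0}` of bounded
linear operators with `T 0 = I`, `T (s+t) = T s ∘ T t` for `s,t ≥ 0`, `‖T t‖ ≤ 1` for `t ≥ 0`,
and `t ↦ T t x` continuous on `[0,∞)` for every `x`. -/
structure ContractionSemigroup (H : Type*) [NormedAddCommGroup H] [NormedSpace ℝ H] where
  T : ℝ → H →L[ℝ] H
  id_at_zero : T 0 = ContinuousLinearMap.id ℝ H
  semigroup : ∀ ⦃s t : ℝ⦄, 0 ≤ s → 0 ≤ t → T (s + t) = (T s).comp (T t)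
  contractive : ∀ ⦃t : ℝ⦄, 0 ≤ t → ‖T t‖ ≤ 1
  strongCont : ∀ x : H, ContinuousOn (fun t => T t x) (Set.Ici (0 : ℝ))

/-- The segment `x_t ∈ C([-τ,0]; H)` of a path `x : ℝ → H` continuous on `[-τ,∞)`, defined for
every real `t` by clamping the argument to `[-τ,∞)`; for `t ≥ 0` it coincides with the usual
segment `θ ↦ x (t + θ)`. -/
def segClamp {H : Type*} [NormedAddCommGroup H] (τ : ℝ)
    (x : ℝ → H) (hx : ContinuousOn x (Set.Ici (-τ))) (t : ℝ) :
    C(Set.Icc (-τ) (0 : ℝ), H) :=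
  ⟨fun θ => x (max (t + θ.1) (-τ)),
    hx.comp_continuous ((continuous_const.add continuous_subtype_val).max continuous_const)
      fun _ => Set.mem_Ici.mpr (le_max_right _ _)⟩

theorem zero_mem_Icc_neg {τ : ℝ} (hτ : 0 < τ) : (0 : ℝ) ∈ Set.Icc (-τ) (0 : ℝ) :=
  Set.mem_Icc.mpr ⟨by linarith, le_rfl⟩

/-- with `Υ(t) = u(t)·T(t)η(0)` for `t ≥ 0`, `Υ = η` on `[-τ,0]`, and
`ḣ(s) = σ⁻¹(DF(x_s)[Υ_s] − u'(s)·T(s)η(0))`, the process `Υ` is a mild solution of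
`dΥ(t) = {AΥ(t) + DF(x_t)[Υ_t] − σ ḣ(t)} dt`, `Υ_0 = η`. -/
theorem upsilon_is_mild_solution
    {H : Type*} [NormedAddCommGroup H] [InnerProductSpace ℝ H] [CompleteSpace H]
    (τ : ℝ) (hτ : 0 < τ)
    (S : ContractionSemigroup H) (σ : H ≃L[ℝ] H)
    (F : C(Set.Icc (-τ) (0 : ℝ), H) → H)
    (DF : C(Set.Icc (-τ) (0 : ℝ), H) → C(Set.Icc (-τ) (0 : ℝ), H) →L[ℝ] H)
    (hF : ∀ ξ, HasFDerivAt F (DF ξ) ξ)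
    (x : ℝ → H) (hx : ContinuousOn x (Set.Ici (-τ)))
    (η : C(Set.Icc (-τ) (0 : ℝ), H))
    (u u' : ℝ → ℝ) (hu : ∀ t, HasDerivAt u (u' t) t) (hu'cont : Continuous u')
    (hu0 : u 0 = 1)
    (Υ : ℝ → H) (hΥcont : ContinuousOn Υ (Set.Ici (-τ)))
    (hΥpos : ∀ t, 0 ≤ t → Υ t = u t • S.T t (η ⟨0, zero_mem_Icc_neg hτ⟩))
    (hΥneg : ∀ t (ht : t ∈ Set.Icc (-τ) (0 : ℝ)), Υ t = η ⟨t, ht⟩)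
    (hdot : ℝ → H)
    (hhdot : ∀ s, 0 ≤ s →
      hdot s = σ.symm (DF (segClamp τ x hx s) (segClamp τ Υ hΥcont s)
        - u' s • S.T s (η ⟨0, zero_mem_Icc_neg hτ⟩))) :
    ∀ t, 0 ≤ t →
      Υ t = S.T t (η ⟨0, zero_mem_Icc_neg hτ⟩)
        + ∫ s in (0 : ℝ)..t,
            S.T (t - s)
              (DF (segClamp τ x hx s) (segClamp τ Υ hΥcont s) - σ (hdot s)) := by
  intro t ht
  set η0 : H := η ⟨0, zero_mem_Icc_neg hτ⟩ with hη0
  have hcongr : ∀ s ∈ Set.uIcc (0 : ℝ) t,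
      S.T (t - s) (DF (segClamp τ x hx s) (segClamp τ Υ hΥcont s) - σ (hdot s))
        = u' s • S.T t η0 := by
    intro s hs
    rw [Set.uIcc_of_le ht] at hs
    obtain ⟨hs0, hst⟩ := hs
    rw [hhdot s hs0, σ.apply_symm_apply, sub_sub_cancel, _root_.map_smul]
    have hsg := S.semigroup (sub_nonneg.mpr hst) hs0
    rw [sub_add_cancel] at hsg
    rw [hsg]; rfl
  rw [intervalIntegral.integral_congr hcongr, intervalIntegral.integral_smul_const]
  have hint : ∫ s in (0:ℝ)..t, u' s = u t - u 0 := by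
    apply intervalIntegral.integral_eq_sub_of_hasDerivAt (fun s _ => hu s)
    exact (hu'cont.intervalIntegrable 0 t)
  rw [hint, hu0, hΥpos t ht, sub_smul, one_smul]
  abel
end
end

section
/- Let τ > 0 and T ∈ (τ, τ+1], and set u(t) := (T − τ − t)⁺/(T − τ). Let (T(t))_{t≥0} be a contraction C₀-semigroup on H, let σ : H → H be a bounded linear bijection with bounded inverse σ⁻¹, let F : 𝒞 → H be Fréchet differentiable with ‖DF(ξ)‖ ≤ K_F for all ξ ∈ 𝒞, let x : [−τ,∞) → H be continuous, let η ∈ 𝒞, and define Υ : [−τ,∞) → H by Υ(t) = u(t)·T(t)η(0) for t ≥ 0 and Υ(t) = η(t) for t ∈ [−τ,0]. Then ∫₀^T ‖ σ⁻¹( DF(x_t)[Υ_t] + (T−τ)⁻¹·1_{[0,T−τ)}(t)·T(t)η(0) ) ‖² dt ≤ 2 ‖σ⁻¹‖² ( (τ+1) K_F² + 1 ) · ‖η‖²_∞ / (T − τ). -/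
open MeasureTheory

noncomputable section

/-- the pathwise quadratic-variation bound
`∫₀ᵀ ‖σ⁻¹(DF(x_t)[Υ_t] + (T-τ)⁻¹ 1_{[0,T-τ)}(t) T(t)η(0))‖² dt
  ≤ 2 ‖σ⁻¹‖² ((τ+1) K_F² + 1) ‖η‖²_∞ / (T-τ)`
for `τ < T ≤ τ + 1`, `u(t) = (T-τ-t)⁺/(T-τ)`, `Υ(t) = u(t)·T(t)η(0)` on `[0,∞)` and `Υ = η`
on `[-τ,0]`. -/
theorem quadratic_variation_bound
    {H : Type*} [NormedAddCommGroup H] [InnerProductSpace ℝ H] [CompleteSpace H]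
    (τ Ttime : ℝ) (hτ : 0 < τ) (hT₁ : τ < Ttime) (hT₂ : Ttime ≤ τ + 1)
    (S : ContractionSemigroup H) (σ : H ≃L[ℝ] H)
    (F : C(Set.Icc (-τ) (0 : ℝ), H) → H)
    (DF : C(Set.Icc (-τ) (0 : ℝ), H) → C(Set.Icc (-τ) (0 : ℝ), H) →L[ℝ] H)
    (hF : ∀ ξ, HasFDerivAt F (DF ξ) ξ)
    (KF : ℝ) (hKF : ∀ ξ, ‖DF ξ‖ ≤ KF)
    (x : ℝ → H) (hx : ContinuousOn x (Set.Ici (-τ)))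
    (η : C(Set.Icc (-τ) (0 : ℝ), H))
    (Υ : ℝ → H) (hΥcont : ContinuousOn Υ (Set.Ici (-τ)))
    (hΥpos : ∀ t, 0 ≤ t →
      Υ t = (max (Ttime - τ - t) 0 / (Ttime - τ)) • S.T t (η ⟨0, zero_mem_Icc_neg hτ⟩))
    (hΥneg : ∀ t (ht : t ∈ Set.Icc (-τ) (0 : ℝ)), Υ t = η ⟨t, ht⟩) :
    (∫ t in (0 : ℝ)..Ttime,
        ‖σ.symm (DF (segClamp τ x hx t) (segClamp τ Υ hΥcont t)
          + (Set.Ico (0 : ℝ) (Ttime - τ)).indicator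
              (fun s => (Ttime - τ)⁻¹ • S.T s (η ⟨0, zero_mem_Icc_neg hτ⟩)) t)‖ ^ 2)
      ≤ 2 * ‖(σ.symm : H →L[ℝ] H)‖ ^ 2 * ((τ + 1) * KF ^ 2 + 1) * ‖η‖ ^ 2 / (Ttime - τ) := by
  set d : ℝ := Ttime - τ with hd_def
  have hd : 0 < d := by simp [hd_def]; linarith
  have hd1 : d ≤ 1 := by simp [hd_def]; linarith
  have hT0 : (0 : ℝ) ≤ Ttime := by linarith
  set c : ℝ := ‖(σ.symm : H →L[ℝ] H)‖ with hc_def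
  have hc0 : 0 ≤ c := norm_nonneg _
  set N : ℝ := ‖η‖ with hN_def
  have hN0 : 0 ≤ N := norm_nonneg _
  set η0 : H := η ⟨0, zero_mem_Icc_neg hτ⟩ with hη0_def
  have hη0N : ‖η0‖ ≤ N := η.norm_coe_le_norm _
  have hKF0 : 0 ≤ KF := (norm_nonneg (DF η)).trans (hKF η)
  -- the semigroup applied to η0 is bounded by N
  have hTN : ∀ s : ℝ, 0 ≤ s → ‖S.T s η0‖ ≤ N := by
    intro s hs
    calc ‖S.T s η0‖ ≤ ‖S.T s‖ * ‖η0‖ := (S.T s).le_opNorm _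
      _ ≤ 1 * N := mul_le_mul (S.contractive hs) hη0N (norm_nonneg _) zero_le_one
      _ = N := one_mul N
  -- the segment of Υ is bounded by N
  have hseg : ∀ t : ℝ, ‖segClamp τ Υ hΥcont t‖ ≤ N := by
    intro t
    refine (ContinuousMap.norm_le _ hN0).mpr ?_
    intro θ
    show ‖Υ (max (t + θ.1) (-τ))‖ ≤ N
    set s : ℝ := max (t + θ.1) (-τ) with hs_def
    have hsτ : -τ ≤ s := le_max_right _ _
    rcases le_or_gt s 0 with h0 | h0
    · rw [hΥneg s ⟨hsτ, h0⟩]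
      exact η.norm_coe_le_norm _
    · rw [hΥpos s h0.le, norm_smul]
      have hcoef : ‖max (Ttime - τ - s) 0 / (Ttime - τ)‖ ≤ 1 := by
        rw [Real.norm_eq_abs, abs_div, abs_of_nonneg (le_max_right _ _),
          abs_of_pos (show (0:ℝ) < Ttime - τ by linarith)]
        rw [div_le_one (by linarith)]
        exact max_le (by linarith) (by linarith)
      calc ‖max (Ttime - τ - s) 0 / (Ttime - τ)‖ * ‖S.T s η0‖
          ≤ 1 * N := mul_le_mul hcoef (hTN s h0.le) (norm_nonneg _) zero_le_one
        _ = N := one_mul N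
  -- abbreviations for the integrand
  set g : ℝ → ℝ := fun t =>
    ‖σ.symm (DF (segClamp τ x hx t) (segClamp τ Υ hΥcont t)
      + (Set.Ico (0 : ℝ) (Ttime - τ)).indicator
          (fun s => (Ttime - τ)⁻¹ • S.T s η0) t)‖ ^ 2 with hg_def
  set f : ℝ → ℝ := fun t =>
    2 * c ^ 2 * ((KF * N) ^ 2
      + (Set.Ico (0 : ℝ) d).indicator (fun _ => (d⁻¹ * N) ^ 2) t) with hf_def
  -- pointwise bound
  have hgf : ∀ t : ℝ, g t ≤ f t := by
    intro t
    set A : H := DF (segClamp τ x hx t) (segClamp τ Υ hΥcont t) with hA_def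
    set B : H := (Set.Ico (0 : ℝ) (Ttime - τ)).indicator
        (fun s => (Ttime - τ)⁻¹ • S.T s η0) t with hB_def
    have hA : ‖A‖ ≤ KF * N := by
      calc ‖A‖ ≤ ‖DF (segClamp τ x hx t)‖ * ‖segClamp τ Υ hΥcont t‖ :=
            (DF _).le_opNorm _
        _ ≤ KF * N := mul_le_mul (hKF _) (hseg t) (norm_nonneg _) hKF0
    have hB : ‖B‖ ^ 2 ≤ (Set.Ico (0 : ℝ) d).indicator (fun _ => (d⁻¹ * N) ^ 2) t := by
      by_cases ht : t ∈ Set.Ico (0 : ℝ) d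
      · rw [Set.indicator_of_mem ht]
        have hBval : B = (Ttime - τ)⁻¹ • S.T t η0 := by
          rw [hB_def, Set.indicator_of_mem (by simpa [hd_def] using ht)]
        have hBn : ‖B‖ ≤ d⁻¹ * N := by
          rw [hBval, norm_smul, Real.norm_eq_abs, ← hd_def,
            abs_of_nonneg (inv_nonneg.mpr hd.le)]
          exact mul_le_mul_of_nonneg_left (hTN t ht.1) (inv_nonneg.mpr hd.le)
        have h1 : 0 ≤ d⁻¹ * N := mul_nonneg (inv_nonneg.mpr hd.le) hN0
        nlinarith [norm_nonneg B]
      · rw [Set.indicator_of_notMem ht]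
        have hBval : B = 0 := by
          rw [hB_def, Set.indicator_of_notMem (by simpa [hd_def] using ht)]
        simp [hBval]
    have h1 : ‖σ.symm (A + B)‖ ≤ c * (‖A‖ + ‖B‖) := by
      calc ‖σ.symm (A + B)‖ = ‖(σ.symm : H →L[ℝ] H) (A + B)‖ := rfl
        _ ≤ c * ‖A + B‖ := (σ.symm : H →L[ℝ] H).le_opNorm _
        _ ≤ c * (‖A‖ + ‖B‖) := mul_le_mul_of_nonneg_left (norm_add_le _ _) hc0
    have h2 : g t = ‖σ.symm (A + B)‖ ^ 2 := rfl
    have h3 : f t = 2 * c ^ 2 * ((KF * N) ^ 2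
        + (Set.Ico (0 : ℝ) d).indicator (fun _ => (d⁻¹ * N) ^ 2) t) := rfl
    rw [h2, h3]
    have hA0 : 0 ≤ ‖A‖ := norm_nonneg _
    have hB0 : 0 ≤ ‖B‖ := norm_nonneg _
    have hKN : 0 ≤ KF * N := mul_nonneg hKF0 hN0
    have hsq : ‖σ.symm (A + B)‖ ^ 2 ≤ (c * (‖A‖ + ‖B‖)) ^ 2 := by
      apply pow_le_pow_left₀ (norm_nonneg _) h1
    have hab : (‖A‖ + ‖B‖) ^ 2 ≤ 2 * ((KF * N) ^ 2 + ‖B‖ ^ 2) := by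
      nlinarith [sq_nonneg (‖A‖ - ‖B‖)]
    have h4 : (c * (‖A‖ + ‖B‖)) ^ 2 = c ^ 2 * (‖A‖ + ‖B‖) ^ 2 := by ring
    have h5 : c ^ 2 * (‖A‖ + ‖B‖) ^ 2 ≤ c ^ 2 * (2 * ((KF * N) ^ 2 + ‖B‖ ^ 2)) :=
      mul_le_mul_of_nonneg_left hab (sq_nonneg c)
    have h7 : 2 * c ^ 2 * ‖B‖ ^ 2
        ≤ 2 * c ^ 2 * (Set.Ico (0 : ℝ) d).indicator (fun _ => (d⁻¹ * N) ^ 2) t :=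
      mul_le_mul_of_nonneg_left hB (by positivity)
    have h6 : c ^ 2 * (2 * ((KF * N) ^ 2 + ‖B‖ ^ 2))
        ≤ 2 * c ^ 2 * ((KF * N) ^ 2
          + (Set.Ico (0 : ℝ) d).indicator (fun _ => (d⁻¹ * N) ^ 2) t) := by
      calc c ^ 2 * (2 * ((KF * N) ^ 2 + ‖B‖ ^ 2))
          = 2 * c ^ 2 * (KF * N) ^ 2 + 2 * c ^ 2 * ‖B‖ ^ 2 := by ring
        _ ≤ 2 * c ^ 2 * (KF * N) ^ 2
            + 2 * c ^ 2 * (Set.Ico (0 : ℝ) d).indicator (fun _ => (d⁻¹ * N) ^ 2) t :=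
            add_le_add_right h7 _
        _ = 2 * c ^ 2 * ((KF * N) ^ 2
            + (Set.Ico (0 : ℝ) d).indicator (fun _ => (d⁻¹ * N) ^ 2) t) := by ring
    exact hsq.trans (h4.le.trans (h5.trans h6))
  -- integrability of f
  have hind_int : IntervalIntegrable
      ((Set.Ico (0 : ℝ) d).indicator (fun _ => (d⁻¹ * N) ^ 2)) volume 0 Ttime := by
    rw [intervalIntegrable_iff_integrableOn_Ioc_of_le hT0]
    exact (integrableOn_const measure_Ioc_lt_top.ne).indicator measurableSet_Ico
  have hf_int : IntervalIntegrable f volume 0 Ttime := by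
    have : IntervalIntegrable (fun t : ℝ => (KF * N) ^ 2
        + (Set.Ico (0 : ℝ) d).indicator (fun _ => (d⁻¹ * N) ^ 2) t) volume 0 Ttime :=
      (intervalIntegrable_const).add hind_int
    simpa [hf_def, mul_add] using this.const_mul (2 * c ^ 2)
  -- value of the indicator integral
  have hind_val : ∫ t in (0 : ℝ)..Ttime,
      (Set.Ico (0 : ℝ) d).indicator (fun _ => (d⁻¹ * N) ^ 2) t = (d⁻¹ * N) ^ 2 * d := by
    rw [intervalIntegral.integral_of_le hT0,
      MeasureTheory.integral_indicator measurableSet_Ico]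
    rw [MeasureTheory.setIntegral_const, measureReal_def, Measure.restrict_apply measurableSet_Ico]
    have hset : Set.Ico (0 : ℝ) d ∩ Set.Ioc 0 Ttime = Set.Ioo 0 d := by
      ext y
      simp only [Set.mem_inter_iff, Set.mem_Ico, Set.mem_Ioc, Set.mem_Ioo]
      constructor
      · rintro ⟨⟨_, h2⟩, ⟨h3, _⟩⟩; exact ⟨h3, h2⟩
      · rintro ⟨h1, h2⟩
        exact ⟨⟨h1.le, h2⟩, h1, by simp [hd_def] at h2 ⊢; linarith⟩
    rw [hset, Real.volume_Ioo, sub_zero, ENNReal.toReal_ofReal hd.le, smul_eq_mul]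
    ring
  -- main case split
  by_cases hgi : IntervalIntegrable g volume 0 Ttime
  · have hmono : (∫ t in (0 : ℝ)..Ttime, g t) ≤ ∫ t in (0 : ℝ)..Ttime, f t :=
      intervalIntegral.integral_mono_on hT0 hgi hf_int (fun t _ => hgf t)
    have hfval : (∫ t in (0 : ℝ)..Ttime, f t)
        = 2 * c ^ 2 * ((KF * N) ^ 2 * Ttime + (d⁻¹ * N) ^ 2 * d) := by
      have : (∫ t in (0 : ℝ)..Ttime, f t)
          = 2 * c ^ 2 * ∫ t in (0 : ℝ)..Ttime, ((KF * N) ^ 2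
            + (Set.Ico (0 : ℝ) d).indicator (fun _ => (d⁻¹ * N) ^ 2) t) := by
        rw [← intervalIntegral.integral_const_mul]
      rw [this, intervalIntegral.integral_add intervalIntegrable_const hind_int,
        intervalIntegral.integral_const, hind_val]
      simp only [smul_eq_mul, sub_zero]
      ring
    have hfinal : 2 * c ^ 2 * ((KF * N) ^ 2 * Ttime + (d⁻¹ * N) ^ 2 * d)
        ≤ 2 * c ^ 2 * ((τ + 1) * KF ^ 2 + 1) * N ^ 2 / d := by
      have hdi1 : (1 : ℝ) ≤ d⁻¹ := by
        have h := mul_le_mul_of_nonneg_right hd1 (inv_nonneg.mpr hd.le)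
        rwa [mul_inv_cancel₀ hd.ne', one_mul] at h
      have h1 : (d⁻¹ * N) ^ 2 * d = N ^ 2 * d⁻¹ := by
        field_simp
      have hkey : KF ^ 2 * N ^ 2 * Ttime ≤ (τ + 1) * KF ^ 2 * N ^ 2 * d⁻¹ := by
        have hT' : Ttime ≤ (τ + 1) * d⁻¹ := by
          calc Ttime ≤ τ + 1 := hT₂
            _ = (τ + 1) * 1 := (mul_one _).symm
            _ ≤ (τ + 1) * d⁻¹ := mul_le_mul_of_nonneg_left hdi1 (by linarith)
        calc KF ^ 2 * N ^ 2 * Ttime ≤ KF ^ 2 * N ^ 2 * ((τ + 1) * d⁻¹) :=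
              mul_le_mul_of_nonneg_left hT' (by positivity)
          _ = (τ + 1) * KF ^ 2 * N ^ 2 * d⁻¹ := by ring
      calc 2 * c ^ 2 * ((KF * N) ^ 2 * Ttime + (d⁻¹ * N) ^ 2 * d)
          = 2 * c ^ 2 * (KF ^ 2 * N ^ 2 * Ttime) + 2 * c ^ 2 * (N ^ 2 * d⁻¹) := by
            rw [h1]; ring
        _ ≤ 2 * c ^ 2 * ((τ + 1) * KF ^ 2 * N ^ 2 * d⁻¹) + 2 * c ^ 2 * (N ^ 2 * d⁻¹) :=
            add_le_add_left (mul_le_mul_of_nonneg_left hkey (by positivity)) _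
        _ = 2 * c ^ 2 * ((τ + 1) * KF ^ 2 + 1) * N ^ 2 / d := by
            rw [div_eq_mul_inv]; ring
    calc (∫ t in (0 : ℝ)..Ttime, g t) ≤ ∫ t in (0 : ℝ)..Ttime, f t := hmono
      _ = 2 * c ^ 2 * ((KF * N) ^ 2 * Ttime + (d⁻¹ * N) ^ 2 * d) := hfval
      _ ≤ 2 * c ^ 2 * ((τ + 1) * KF ^ 2 + 1) * N ^ 2 / d := hfinal
  · rw [show (∫ t in (0 : ℝ)..Ttime, g t) = 0 from intervalIntegral.integral_undef hgi]
    apply div_nonneg _ hd.le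
    have h1 : (0:ℝ) ≤ (τ + 1) * KF ^ 2 + 1 := by nlinarith [sq_nonneg KF]
    exact mul_nonneg (mul_nonneg (by positivity) h1) (sq_nonneg N)
end
end

section
/- Let E be a real normed vector space equipped with its Borel σ-algebra, let κ₁ and κ₂ be Markov kernels from E to E, and let C ≥ 0. Suppose that for every bounded measurable g : E → ℝ and all ξ, η ∈ E the directional derivative ∇_η(κ₁ g)(ξ) := lim_{ε→0} ε⁻¹[ (κ₁ g)(ξ + εη) − (κ₁ g)(ξ) ] exists and satisfies |∇_η(κ₁ g)(ξ)|² ≤ C · κ₁(g²)(ξ). Then the composed Markov operator (κ f)(ξ) := ∫_E (κ₂ f)(y) κ₁(ξ, dy) satisfies the same estimate: for every bounded measurable f : E → ℝ and all ξ, η ∈ E, the directional derivative ∇_η(κ f)(ξ) exists and |∇_η(κ f)(ξ)|² ≤ C · κ(f²)(ξ). -/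
open MeasureTheory ProbabilityTheory

private lemma integrable_of_bound' {E : Type*} [MeasurableSpace E] (μ : Measure E)
    [IsFiniteMeasure μ] (h : E → ℝ) (hh : Measurable h) (M : ℝ) (hM : ∀ y, |h y| ≤ M) :
    Integrable h μ :=
  memLp_one_iff_integrable.mp <|
    MemLp.of_bound hh.aestronglyMeasurable M (Filter.Eventually.of_forall fun y => by
      simpa using hM y)

private lemma sq_integral_le_integral_sq' {E : Type*} [MeasurableSpace E] (μ : Measure E)
    [IsProbabilityMeasure μ] (f : E → ℝ) (hf : Measurable f) (M : ℝ) (hM : ∀ y, |f y| ≤ M) :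
    (∫ z, f z ∂μ) ^ 2 ≤ ∫ z, (f z) ^ 2 ∂μ := by
  have hmem : MemLp f 2 μ :=
    MemLp.of_bound hf.aestronglyMeasurable M (Filter.Eventually.of_forall fun y => by
      simpa using hM y)
  have h := variance_nonneg f μ
  rw [variance_eq_sub hmem] at h
  have : μ[f ^ 2] = ∫ z, (f z) ^ 2 ∂μ := by simp [Pi.pow_apply]
  linarith [h, this ▸ h]

/-- if the Markov operator of `κ₁` satisfies the gradient estimate
`|∇_η(κ₁ g)(ξ)|² ≤ C κ₁(g²)(ξ)` for all bounded measurable `g`, then the composed Markov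
operator `(κ f)(ξ) = ∫ (κ₂ f)(y) κ₁(ξ, dy)` satisfies the same estimate. -/
theorem composed_kernel_gradient_estimate
    {E : Type*} [NormedAddCommGroup E] [NormedSpace ℝ E]
    [MeasurableSpace E] [BorelSpace E]
    (κ₁ κ₂ : Kernel E E) [IsMarkovKernel κ₁] [IsMarkovKernel κ₂]
    (C : ℝ) (hC : 0 ≤ C)
    (h₁ : ∀ g : E → ℝ, Measurable g → (∃ M, ∀ y, |g y| ≤ M) →
      ∀ ξ η : E, ∃ d : ℝ,
        HasDerivAt (fun ε : ℝ => ∫ y, g y ∂(κ₁ (ξ + ε • η))) d 0 ∧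
        d ^ 2 ≤ C * ∫ y, (g y) ^ 2 ∂(κ₁ ξ)) :
    ∀ f : E → ℝ, Measurable f → (∃ M, ∀ y, |f y| ≤ M) →
      ∀ ξ η : E, ∃ d : ℝ,
        HasDerivAt (fun ε : ℝ => ∫ y, (∫ z, f z ∂(κ₂ y)) ∂(κ₁ (ξ + ε • η))) d 0 ∧
        d ^ 2 ≤ C * ∫ y, (∫ z, (f z) ^ 2 ∂(κ₂ y)) ∂(κ₁ ξ) := by
  intro f hf hfM ξ η
  obtain ⟨M, hM⟩ := hfM
  set g : E → ℝ := fun y => ∫ z, f z ∂(κ₂ y) with hg_def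
  have hg_sm : StronglyMeasurable g := by
    have : StronglyMeasurable (Function.uncurry fun (_ : E) (z : E) => f z) :=
      (hf.comp measurable_snd).stronglyMeasurable
    exact this.integral_kernel_prod_right (κ := κ₂)
  have hg : Measurable g := hg_sm.measurable
  have hgM : ∀ y, |g y| ≤ M := by
    intro y
    have := norm_integral_le_of_norm_le_const (μ := κ₂ y) (C := M)
      (Filter.Eventually.of_forall fun z => by rw [Real.norm_eq_abs]; exact hM z)
    simpa using this
  obtain ⟨d, hd, hd2⟩ := h₁ g hg ⟨M, hgM⟩ ξ η
  refine ⟨d, hd, le_trans hd2 ?_⟩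
  refine mul_le_mul_of_nonneg_left ?_ hC
  -- ∫ (g y)^2 ∂κ₁ ξ ≤ ∫ (∫ f² ∂κ₂ y) ∂κ₁ ξ
  have hfsq : Measurable fun z => (f z) ^ 2 := hf.pow_const 2
  have hq_sm : StronglyMeasurable fun y => ∫ z, (f z) ^ 2 ∂(κ₂ y) := by
    have : StronglyMeasurable (Function.uncurry fun (_ : E) (z : E) => (f z) ^ 2) :=
      (hfsq.comp measurable_snd).stronglyMeasurable
    exact this.integral_kernel_prod_right (κ := κ₂)
  refine integral_mono (E := ℝ) ?_ ?_ ?_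
  · exact integrable_of_bound' _ _ (hg.pow_const 2) (M ^ 2) fun y => by
      rw [abs_pow, ← abs_pow]
      simpa [sq_abs] using pow_le_pow_left₀ (abs_nonneg _) (hgM y) 2
  · exact integrable_of_bound' _ _ hq_sm.measurable (M ^ 2) fun y => by
      have := norm_integral_le_of_norm_le_const (μ := κ₂ y) (C := M ^ 2)
        (Filter.Eventually.of_forall fun z => by
          rw [Real.norm_eq_abs]
          calc |f z ^ 2| = |f z| ^ 2 := by rw [abs_pow]
          _ ≤ M ^ 2 := pow_le_pow_left₀ (abs_nonneg _) (hM z) 2)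
      simpa using this
  · intro y
    exact sq_integral_le_integral_sq' (κ₂ y) f hf M hM
end

section
/- Let E be a real normed vector space equipped with its Borel σ-algebra, let κ₁ and κ₂ be Markov kernels from E to E, and let β ≥ 0. Suppose that for every bounded measurable g : E → ℝ with g > 0 pointwise, all ξ, η ∈ E and every δ > 0, the directional derivative ∇_η(κ₁ g)(ξ) := lim_{ε→0} ε⁻¹[ (κ₁ g)(ξ + εη) − (κ₁ g)(ξ) ] exists and satisfies |∇_η(κ₁ g)(ξ)| ≤ δ·[ κ₁(g log g)(ξ) − (κ₁ g)(ξ)·log (κ₁ g)(ξ) ] + (β‖η‖²/δ)·(κ₁ g)(ξ). Then the composed Markov operator (κ f)(ξ) := ∫_E (κ₂ f)(y) κ₁(ξ, dy) satisfies the same entropy-gradient estimate: for every bounded measurable f : E → ℝ with f > 0 pointwise, all ξ, η ∈ E and every δ > 0, ∇_η(κ f)(ξ) exists and |∇_η(κ f)(ξ)| ≤ δ·[ κ(f log f)(ξ) − (κ f)(ξ)·log (κ f)(ξ) ] + (β‖η‖²/δ)·(κ f)(ξ). -/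
open MeasureTheory ProbabilityTheory

/-- if the Markov operator of `κ₁` satisfies the entropy-gradient estimate
`|∇_η(κ₁ g)(ξ)| ≤ δ[κ₁(g log g)(ξ) − (κ₁ g)(ξ) log (κ₁ g)(ξ)] + (β‖η‖²/δ)(κ₁ g)(ξ)` for all
bounded measurable `g > 0` and all `δ > 0`, then the composed Markov operator
`(κ f)(ξ) = ∫ (κ₂ f)(y) κ₁(ξ, dy)` satisfies the same estimate. -/
theorem composed_kernel_entropy_gradient_estimate
    {E : Type*} [NormedAddCommGroup E] [NormedSpace ℝ E]
    [MeasurableSpace E] [BorelSpace E]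
    (κ₁ κ₂ : Kernel E E) [IsMarkovKernel κ₁] [IsMarkovKernel κ₂]
    (β : ℝ) (hβ : 0 ≤ β)
    (h₁ : ∀ g : E → ℝ, Measurable g → (∃ M, ∀ y, |g y| ≤ M) → (∀ y, 0 < g y) →
      ∀ ξ η : E, ∀ δ : ℝ, 0 < δ → ∃ d : ℝ,
        HasDerivAt (fun ε : ℝ => ∫ y, g y ∂(κ₁ (ξ + ε • η))) d 0 ∧
        |d| ≤ δ * ((∫ y, g y * Real.log (g y) ∂(κ₁ ξ))
                - (∫ y, g y ∂(κ₁ ξ)) * Real.log (∫ y, g y ∂(κ₁ ξ)))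
              + (β * ‖η‖ ^ 2 / δ) * ∫ y, g y ∂(κ₁ ξ)) :
    ∀ f : E → ℝ, Measurable f → (∃ M, ∀ y, |f y| ≤ M) → (∀ y, 0 < f y) →
      ∀ ξ η : E, ∀ δ : ℝ, 0 < δ → ∃ d : ℝ,
        HasDerivAt (fun ε : ℝ => ∫ y, (∫ z, f z ∂(κ₂ y)) ∂(κ₁ (ξ + ε • η))) d 0 ∧
        |d| ≤ δ * ((∫ y, (∫ z, f z * Real.log (f z) ∂(κ₂ y)) ∂(κ₁ ξ))
                - (∫ y, (∫ z, f z ∂(κ₂ y)) ∂(κ₁ ξ))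
                  * Real.log (∫ y, (∫ z, f z ∂(κ₂ y)) ∂(κ₁ ξ)))
              + (β * ‖η‖ ^ 2 / δ) * ∫ y, (∫ z, f z ∂(κ₂ y)) ∂(κ₁ ξ) := by
  rintro f hf ⟨M, hM⟩ hfpos ξ η δ hδ
  set g : E → ℝ := fun y => ∫ z, f z ∂(κ₂ y) with hg_def
  -- f is integrable w.r.t. every κ₂ y
  have hfint : ∀ y, Integrable f (κ₂ y) := fun y =>
    (integrable_const M).mono' hf.aestronglyMeasurable
      (Filter.Eventually.of_forall fun z => by simpa using hM z)
  -- measurability of g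
  have hgmeas : Measurable g := by
    have : StronglyMeasurable fun p : E × E => f p.2 :=
      (hf.comp measurable_snd).stronglyMeasurable
    exact this.integral_kernel_prod_right'.measurable
  -- bound on g
  have hgbound : ∀ y, |g y| ≤ M := by
    intro y
    rw [← Real.norm_eq_abs]
    refine (norm_integral_le_integral_norm f).trans ?_
    calc ∫ z, ‖f z‖ ∂(κ₂ y) ≤ ∫ _, M ∂(κ₂ y) :=
        integral_mono (hfint y).norm (integrable_const M)
          (fun z => by simpa [Real.norm_eq_abs] using hM z)
    _ = M := by simp
  -- positivity of g
  have hgpos : ∀ y, 0 < g y := by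
    intro y
    rw [hg_def]
    rw [integral_pos_iff_support_of_nonneg (fun z => (hfpos z).le) (hfint y)]
    have : Function.support f = Set.univ := by
      ext z; simp [Function.mem_support, (hfpos z).ne']
    simp [this]
  obtain ⟨d, hd1, hd2⟩ := h₁ g hgmeas ⟨M, hgbound⟩ hgpos ξ η δ hδ
  refine ⟨d, hd1, ?_⟩
  -- boundedness of f log f
  obtain ⟨C, hC⟩ := (isCompact_Icc (a := (0:ℝ)) (b := M)).exists_bound_of_continuousOn
    Real.continuous_mul_log.continuousOn
  have hMpos : 0 < M := lt_of_lt_of_le (hfpos 0) (le_of_abs_le (hM 0))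
  have hmemIcc : ∀ z, f z ∈ Set.Icc (0:ℝ) M :=
    fun z => ⟨(hfpos z).le, le_of_abs_le (hM z)⟩
  have hflf_bound : ∀ z, ‖f z * Real.log (f z)‖ ≤ C := fun z => hC _ (hmemIcc z)
  have hflf_meas : Measurable fun z => f z * Real.log (f z) :=
    hf.mul (Real.measurable_log.comp hf)
  have hflfint : ∀ y, Integrable (fun z => f z * Real.log (f z)) (κ₂ y) := fun y =>
    (integrable_const C).mono' hflf_meas.aestronglyMeasurable
      (Filter.Eventually.of_forall hflf_bound)
  -- Jensen pointwise: g y * log (g y) ≤ ∫ f log f dκ₂ y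
  have hjensen : ∀ y, g y * Real.log (g y) ≤ ∫ z, f z * Real.log (f z) ∂(κ₂ y) := by
    intro y
    have := Real.convexOn_mul_log.map_integral_le (μ := κ₂ y) (f := f)
      Real.continuous_mul_log.continuousOn isClosed_Ici
      (Filter.Eventually.of_forall fun z => (hfpos z).le) (hfint y)
      ((integrable_const C).mono'
        (hflf_meas.aestronglyMeasurable)
        (Filter.Eventually.of_forall hflf_bound))
    exact this
  -- measurability/boundedness of y ↦ ∫ f log f dκ₂ y
  have hGmeas : Measurable fun y => ∫ z, f z * Real.log (f z) ∂(κ₂ y) := by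
    have : StronglyMeasurable fun p : E × E => f p.2 * Real.log (f p.2) :=
      (hflf_meas.comp measurable_snd).stronglyMeasurable
    exact this.integral_kernel_prod_right'.measurable
  have hGbound : ∀ y, |∫ z, f z * Real.log (f z) ∂(κ₂ y)| ≤ C := by
    intro y
    rw [← Real.norm_eq_abs]
    refine (norm_integral_le_integral_norm _).trans ?_
    calc ∫ z, ‖f z * Real.log (f z)‖ ∂(κ₂ y) ≤ ∫ _, C ∂(κ₂ y) :=
        integral_mono (hflfint y).norm (integrable_const C) hflf_bound
    _ = C := by simp
  -- the glog g bound: C' for |g y * log (g y)|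
  have hglg_bound : ∀ y, ‖g y * Real.log (g y)‖ ≤ C :=
    fun y => hC _ ⟨(hgpos y).le, le_of_abs_le (hgbound y)⟩
  have hglg_meas : Measurable fun y => g y * Real.log (g y) :=
    hgmeas.mul (Real.measurable_log.comp hgmeas)
  have hglgint : Integrable (fun y => g y * Real.log (g y)) (κ₁ ξ) :=
    (integrable_const C).mono' hglg_meas.aestronglyMeasurable
      (Filter.Eventually.of_forall hglg_bound)
  have hGint : Integrable (fun y => ∫ z, f z * Real.log (f z) ∂(κ₂ y)) (κ₁ ξ) :=
    (integrable_const C).mono' hGmeas.aestronglyMeasurable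
      (Filter.Eventually.of_forall fun y => by simpa using hGbound y)
  have hmono : (∫ y, g y * Real.log (g y) ∂(κ₁ ξ))
      ≤ ∫ y, (∫ z, f z * Real.log (f z) ∂(κ₂ y)) ∂(κ₁ ξ) :=
    integral_mono hglgint hGint hjensen
  refine hd2.trans ?_
  have h1 : δ * ((∫ y, g y * Real.log (g y) ∂(κ₁ ξ))
        - (∫ y, g y ∂(κ₁ ξ)) * Real.log (∫ y, g y ∂(κ₁ ξ)))
      ≤ δ * ((∫ y, (∫ z, f z * Real.log (f z) ∂(κ₂ y)) ∂(κ₁ ξ))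
        - (∫ y, g y ∂(κ₁ ξ)) * Real.log (∫ y, g y ∂(κ₁ ξ))) := by
    apply mul_le_mul_of_nonneg_left _ hδ.le
    linarith
  linarith
end
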